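/- Let ρ₁, ρ₂, u₁, u₂ be smooth on Q_T = (0,1)×(0,T), with ρ_i > 0, solving ∂_t ρ_i + ∂ₓ(ρ_i u_i) = 0 and ρ_i(∂_t u_i + u_i ∂ₓu_i) + K_i ∂ₓ(ρ_i^{γ_i}) = Σ_j μ_{ij} ∂ₓₓu_j + (−1)^{i+1} a(u₂ − u₁), with u_i vanishing at x = 0, 1, where a > 0, K_i > 0, γ_i > 1, and the viscosity matrix satisfies (Mξ,ξ) ≥ M₀|ξ|². Then for all t ∈ [0,T]: Σ_i ∫₀¹ ((1/2)ρ_i u_i² + (K_i/(γ_i−1)) ρ_i^{γ_i}) dx + M₀ Σ_i ∫₀^t∫₀¹ |∂ₓu_i|² dx dτ + a ∫₀^t∫₀¹ |u₁−u₂|² dx dτ ≤ Σ_i ∫₀¹ ((1/2)ρ_{0i} u_{0i}² + (K_i/(γ_i−1)) ρ_{0i}^{γ_i}) dx. -/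

import Mathlib

/-!
The energy density `eᵢ = ½ρᵢuᵢ² + Kᵢ/(γᵢ-1) ρᵢ^γᵢ` obeys a local balance law: by the mass
equation, `∂ₜeᵢ + ∂ₓ((eᵢ + Kᵢρᵢ^γᵢ)uᵢ - uᵢσᵢ) = uᵢfᵢ - ∂ₓuᵢ σᵢ`, where `σᵢ = ∑ⱼ μᵢⱼ ∂ₓuⱼ` is the
viscous stress and `fᵢ` the drag. The flux vanishes at `x = 0, 1` with `uᵢ`, the drag work sums
to `-a(u₁ - u₂)²`, and the viscous work is at least `M₀ ∑ᵢ |∂ₓuᵢ|²` by coercivity of `μ`.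
Integrating in `x`, the energy plus the dissipation accumulated up to time `t` is nonincreasing.
-/

open MeasureTheory intervalIntegral Set Real Function

theorem hasDerivAt_intervalIntegral_of_continuous {F F' : ℝ → ℝ → ℝ}
    (hF : Continuous (uncurry F)) (hF' : Continuous (uncurry F'))
    (hd : ∀ x s, HasDerivAt (F x) (F' x s) s) (a b t : ℝ) :
    HasDerivAt (fun s => ∫ x in a..b, F x s) (∫ x in a..b, F' x t) t := by
  obtain ⟨C, hC⟩ := (isCompact_uIcc.prod (isCompact_Icc (a := t - 1) (b := t + 1)))
    |>.exists_bound_of_continuousOn hF'.continuousOn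
  refine (hasDerivAt_integral_of_dominated_loc_of_deriv_le (μ := volume) (F := fun s x => F x s)
    (F' := fun s x => F' x s) (bound := fun _ => C)
    (Metric.ball_mem_nhds t one_pos) ?_ ?_ ?_ ?_ intervalIntegrable_const ?_).2
  · exact .of_forall fun s => (by fun_prop : Continuous fun x => F x s).aestronglyMeasurable
  · exact (by fun_prop : Continuous fun x => F x t).intervalIntegrable a b
  · exact (by fun_prop : Continuous fun x => F' x t).aestronglyMeasurable
  · refine .of_forall fun x hx s hs => hC (x, s) ⟨uIoc_subset_uIcc hx, ?_⟩
    rw [Real.ball_eq_Ioo] at hs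
    exact Ioo_subset_Icc_self hs
  · exact .of_forall fun x _ s _ => hd x s

theorem sum_integral_add_integral_dissipation_le {ι : Type*} (I : Finset ι)
    {e e' : ι → ℝ → ℝ → ℝ} {F F' d : ℝ → ℝ → ℝ} {a b t₀ t₁ : ℝ}
    (he : ∀ i, Continuous (uncurry (e i))) (he' : ∀ i, Continuous (uncurry (e' i)))
    (hd : Continuous (uncurry d)) (hde : ∀ i x s, HasDerivAt (e i x) (e' i x s) s)
    (hdF : ∀ s, ∀ x ∈ Icc a b, HasDerivAt (F · s) (F' x s) x) (hbc : ∀ s, F a s = F b s)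
    (hloc : ∀ s, ∀ x ∈ Icc a b, ∑ i ∈ I, e' i x s + F' x s + d x s ≤ 0) (hab : a ≤ b)
    (ht : t₀ ≤ t₁) :
    (∑ i ∈ I, ∫ x in a..b, e i x t₁) + ∫ s in t₀..t₁, ∫ x in a..b, d x s ≤
      ∑ i ∈ I, ∫ x in a..b, e i x t₀ := by
  have hD : Continuous fun s => ∫ x in a..b, d x s := by fun_prop
  have hG : ∀ s, HasDerivAt
      (fun s => (∑ i ∈ I, ∫ x in a..b, e i x s) + ∫ τ in t₀..s, ∫ x in a..b, d x τ)
      ((∑ i ∈ I, ∫ x in a..b, e' i x s) + ∫ x in a..b, d x s) s := fun s =>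
    (HasDerivAt.fun_sum fun i _ =>
      hasDerivAt_intervalIntegral_of_continuous (he i) (he' i) (hde i) a b s).fun_add
      (hD.integral_hasStrictDerivAt t₀ s).hasDerivAt
  have hG' : ∀ s, (∑ i ∈ I, ∫ x in a..b, e' i x s) + ∫ x in a..b, d x s ≤ 0 := fun s => by
    have hint : ∀ i ∈ I, IntervalIntegrable (e' i · s) volume a b := fun i _ =>
      (by fun_prop : Continuous fun x => e' i x s).intervalIntegrable a b
    rw [← intervalIntegral.integral_finsetSum hint, ← integral_add
      ((by fun_prop : Continuous fun x => ∑ i ∈ I, e' i x s).intervalIntegrable a b)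
      ((by fun_prop : Continuous fun x => d x s).intervalIntegrable a b)]
    have := integral_le_sub_of_hasDeriv_right_of_le (g := fun x => -F x s)
      (g' := fun x => -F' x s) hab
      (fun x hx => (hdF s x hx).continuousAt.neg.continuousWithinAt)
      (fun x hx => (hdF s x (Ioo_subset_Icc_self hx)).neg.hasDerivWithinAt)
      (by fun_prop : Continuous fun x => ∑ i ∈ I, e' i x s + d x s).integrableOn_Icc
      (fun x hx => by linarith [hloc s x (Ioo_subset_Icc_self hx)])
    simpa [hbc s] using this
  simpa using antitone_of_hasDerivAt_nonpos hG hG' ht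

theorem exists_hasDerivAt_of_hasDerivAt_rpow {f : ℝ → ℝ} {p d x : ℝ} (hf : ∀ y, 0 ≤ f y)
    (hx : f x ≠ 0) (hp : p ≠ 0) (h : HasDerivAt (fun y => f y ^ p) d x) :
    ∃ d', HasDerivAt f d' x := by
  have h' := h.rpow_const (p := p⁻¹) (Or.inl (rpow_pos_of_pos (hx.lt_of_le' (hf x)) p).ne')
  simp only [rpow_rpow_inv (hf _) hp] at h'
  exact ⟨_, h'⟩

noncomputable def energyDensity (K γ ρ u : ℝ) : ℝ := 1 / 2 * ρ * u ^ 2 + K / (γ - 1) * ρ ^ γ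

noncomputable def energyFlux (K γ ρ u : ℝ) : ℝ := (energyDensity K γ ρ u + K * ρ ^ γ) * u

noncomputable def energyDensityDeriv (K γ ρ u ρ' u' : ℝ) : ℝ :=
  1 / 2 * ρ' * u ^ 2 + ρ * u * u' + K / (γ - 1) * (ρ' * γ * ρ ^ (γ - 1))

theorem hasDerivAt_energyDensity {K γ : ℝ} {ρ u : ℝ → ℝ} {ρ' u' t : ℝ} (hρ : ρ t ≠ 0)
    (hρ' : HasDerivAt ρ ρ' t) (hu' : HasDerivAt u u' t) :
    HasDerivAt (fun s => energyDensity K γ (ρ s) (u s))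
      (energyDensityDeriv K γ (ρ t) (u t) ρ' u') t := by
  refine HasDerivAt.congr_deriv ((((hρ'.const_mul (1 / 2)).fun_mul (hu'.fun_pow 2)).fun_add
    ((hρ'.rpow_const (p := γ) (Or.inl hρ)).const_mul (K / (γ - 1))))) ?_
  simp only [energyDensityDeriv]
  ring

theorem hasDerivAt_energyFlux_sub_mul {K γ : ℝ} {ρ u σ : ℝ → ℝ} {x ρt ut m' p' ux σ' f : ℝ}
    (hρ : ∀ y, 0 < ρ y) (hγ₀ : γ ≠ 0) (hγ₁ : γ ≠ 1)
    (hm : HasDerivAt (fun y => ρ y * u y) m' x) (hp : HasDerivAt (fun y => ρ y ^ γ) p' x)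
    (hu : HasDerivAt u ux x) (hσ : HasDerivAt σ σ' x)
    (hmass : ρt + m' = 0) (hmom : ρ x * (ut + u x * ux) + K * p' = σ' + f) :
    HasDerivAt (fun y => energyFlux K γ (ρ y) (u y) - u y * σ y)
      (u x * f - ux * σ x - energyDensityDeriv K γ (ρ x) (u x) ρt ut) x := by
  -- only `ρ ^ γ` is assumed differentiable in `x`; `∂ₓρ` is recovered from it
  obtain ⟨ρx, hρx⟩ := exists_hasDerivAt_of_hasDerivAt_rpow (fun y => (hρ y).le) (hρ x).ne' hγ₀ hp
  have hpow : HasDerivAt (fun y => ρ y ^ γ) (ρx * γ * ρ x ^ (γ - 1)) x :=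
    hρx.rpow_const (Or.inl (hρ x).ne')
  rw [hm.unique (hρx.mul hu)] at hmass
  rw [hp.unique hpow] at hmom
  have hργ : ρ x ^ γ = ρ x ^ (γ - 1) * ρ x := by rw [← rpow_add_one (hρ x).ne', sub_add_cancel]
  have hK : K / (γ - 1) * (γ - 1) = K := div_mul_cancel₀ _ (sub_ne_zero.2 hγ₁)
  refine HasDerivAt.congr_deriv ((((((hρx.const_mul (1 / 2)).fun_mul (hu.fun_pow 2)).fun_add
    (hpow.const_mul (K / (γ - 1)))).fun_add (hpow.const_mul K)).fun_mul hu).fun_sub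
    (hu.fun_mul hσ)) ?_
  simp only [energyDensityDeriv]
  -- the balance is `(½u² + specific enthalpy) · (mass equation) + u · (momentum equation)`
  linear_combination (1 / 2 * u x ^ 2 + K / (γ - 1) * γ * ρ x ^ (γ - 1)) * hmass + u x * hmom
    + (K / (γ - 1) + K) * ux * hργ - ρ x ^ (γ - 1) * ρ x * ux * hK

theorem drag_add_viscous_work_le {a M₀ : ℝ} {μ : Fin 2 → Fin 2 → ℝ}
    (hμ : ∀ ξ : Fin 2 → ℝ, M₀ * (∑ i, ξ i ^ 2) ≤ ∑ i, ∑ j, μ i j * ξ j * ξ i) (u ux : Fin 2 → ℝ) :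
    ∑ i, (u i * ((-1) ^ ((i : ℕ) + 1 + 1) * a * (u 1 - u 0)) - ux i * ∑ j, μ i j * ux j) +
      (M₀ * ∑ i, ux i ^ 2 + a * (u 0 - u 1) ^ 2) ≤ 0 := by
  have := hμ ux
  simp only [Fin.sum_univ_two] at this ⊢
  norm_num
  linarith

theorem intervalIntegral_mul_sum_add_mul {ι : Type*} (s : Finset ι) {f : ι → ℝ → ℝ} {g : ℝ → ℝ}
    {a b : ℝ} (c d : ℝ) (hf : ∀ i ∈ s, IntervalIntegrable (f i) volume a b)
    (hg : IntervalIntegrable g volume a b) :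
    ∫ x in a..b, (c * ∑ i ∈ s, f i x + d * g x) =
      c * ∑ i ∈ s, (∫ x in a..b, f i x) + d * ∫ x in a..b, g x := by
  have hsum : IntervalIntegrable (fun x => ∑ i ∈ s, f i x) volume a b := by
    simpa only [← Finset.sum_apply] using IntervalIntegrable.sum s hf
  rw [intervalIntegral.integral_add (hsum.const_mul c) (hg.const_mul d),
    intervalIntegral.integral_const_mul, intervalIntegral.integral_const_mul,
    intervalIntegral.integral_finsetSum hf]

theorem statement10_general
    (T : ℝ)
    (a M₀ : ℝ)
    (K γ : Fin 2 → ℝ) (hγ : ∀ i, 1 < γ i)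
    (μ : Fin 2 → Fin 2 → ℝ)
    (hμ : ∀ ξ : Fin 2 → ℝ, M₀ * (∑ i, (ξ i) ^ 2) ≤ ∑ i, ∑ j, μ i j * ξ j * ξ i)
    -- unknowns and their derivatives
    (ρ u ρt mx ut ux uxx pγx : Fin 2 → ℝ → ℝ → ℝ)
    (hρpos : ∀ i x t, 0 < ρ i x t)
    (hsmooth : ∀ i, Continuous (fun p : ℝ × ℝ => ρ i p.1 p.2) ∧
      Continuous (fun p : ℝ × ℝ => u i p.1 p.2) ∧
      Continuous (fun p : ℝ × ℝ => ut i p.1 p.2) ∧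
      Continuous (fun p : ℝ × ℝ => ux i p.1 p.2) ∧
      Continuous (fun p : ℝ × ℝ => uxx i p.1 p.2) ∧
      Continuous (fun p : ℝ × ℝ => ρt i p.1 p.2) ∧
      Continuous (fun p : ℝ × ℝ => mx i p.1 p.2) ∧
      Continuous (fun p : ℝ × ℝ => pγx i p.1 p.2))
    (hρt : ∀ i x t, HasDerivAt (fun s => ρ i x s) (ρt i x t) t)
    (hmx : ∀ i x t, HasDerivAt (fun y => ρ i y t * u i y t) (mx i x t) x)
    (hut : ∀ i x t, HasDerivAt (fun s => u i x s) (ut i x t) t)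
    (hux : ∀ i x t, HasDerivAt (fun y => u i y t) (ux i x t) x)
    (huxx : ∀ i x t, HasDerivAt (fun y => ux i y t) (uxx i x t) x)
    (hpγx : ∀ i x t, HasDerivAt (fun y => ρ i y t ^ γ i) (pγx i x t) x)
    -- the equations
    (hmass : ∀ i x t, ρt i x t + mx i x t = 0)
    (hmom : ∀ i x t,
      ρ i x t * (ut i x t + u i x t * ux i x t) + K i * pγx i x t =
        (∑ j, μ i j * uxx j x t) +
          (-1) ^ ((i : ℕ) + 1 + 1) * a * (u 1 x t - u 0 x t))
    -- boundary conditions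
    (hbc : ∀ i t, u i 0 t = 0 ∧ u i 1 t = 0) :
    ∀ t ∈ Icc 0 T,
      (∑ i, ∫ x in (0:ℝ)..1,
          ((1/2) * ρ i x t * (u i x t) ^ 2 +
            K i / (γ i - 1) * ρ i x t ^ γ i)) +
        M₀ * (∑ i, ∫ τ in (0:ℝ)..t, ∫ x in (0:ℝ)..1, (ux i x τ) ^ 2) +
        a * (∫ τ in (0:ℝ)..t, ∫ x in (0:ℝ)..1, (u 0 x τ - u 1 x τ) ^ 2) ≤
      ∑ i, ∫ x in (0:ℝ)..1,
          ((1/2) * ρ i x 0 * (u i x 0) ^ 2 +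
            K i / (γ i - 1) * ρ i x 0 ^ γ i) := by
  intro t ht
  simp only [forall_and] at hsmooth
  obtain ⟨hcρ, hcu, hcut, hcux, -, hcρt, -, -⟩ := hsmooth
  have hγ₀ : ∀ i, 0 ≤ γ i := fun i => zero_le_one.trans (hγ i).le
  have hγ₁ : ∀ i, 0 ≤ γ i - 1 := fun i => sub_nonneg.2 (hγ i).le
  have key := sum_integral_add_integral_dissipation_le Finset.univ
    (e := fun i x s => energyDensity (K i) (γ i) (ρ i x s) (u i x s))
    (F := fun x s => ∑ i, (energyFlux (K i) (γ i) (ρ i x s) (u i x s) -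
      u i x s * ∑ j, μ i j * ux j x s))
    (d := fun x s => M₀ * ∑ i, ux i x s ^ 2 + a * (u 0 x s - u 1 x s) ^ 2)
    (fun i => by unfold energyDensity; fun_prop (disch := exact hγ₀ _))
    (fun i => by unfold energyDensityDeriv; fun_prop (disch := exact hγ₁ _)) (by fun_prop)
    (fun i x s => hasDerivAt_energyDensity (hρpos i x s).ne' (hρt i x s) (hut i x s))
    (fun s x _ => HasDerivAt.fun_sum fun i _ => hasDerivAt_energyFlux_sub_mul (hρpos i · s)
      (zero_lt_one.trans (hγ i)).ne' (hγ i).ne' (hmx i x s) (hpγx i x s) (hux i x s)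
      (HasDerivAt.fun_sum fun j _ => (huxx j x s).const_mul (μ i j)) (hmass i x s) (hmom i x s))
    (fun s => by simp [energyFlux, hbc])
    (fun s x _ => by
      rw [Finset.sum_sub_distrib]
      linarith [drag_add_viscous_work_le (a := a) hμ (u · x s) (ux · x s)])
    zero_le_one ht.1
  have hD : ∀ s, ∫ x in (0:ℝ)..1, (M₀ * ∑ i, ux i x s ^ 2 + a * (u 0 x s - u 1 x s) ^ 2) =
      M₀ * ∑ i, (∫ x in (0:ℝ)..1, ux i x s ^ 2) + a * ∫ x in (0:ℝ)..1, (u 0 x s - u 1 x s) ^ 2 :=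
    fun s => intervalIntegral_mul_sum_add_mul _ _ _
      (fun i _ => Continuous.intervalIntegrable (by fun_prop) _ _)
      (Continuous.intervalIntegrable (by fun_prop) _ _)
  rw [integral_congr fun s _ => hD s, intervalIntegral_mul_sum_add_mul _ _ _
      (fun i _ => Continuous.intervalIntegrable (by fun_prop) _ _)
      (Continuous.intervalIntegrable (by fun_prop) _ _), ← add_assoc] at key
  exact key

/-- Fundamental energy estimate for the 1D barotropic two-fluid
system.  Smooth positive solutions of
`∂_tρ_i + ∂ₓ(ρ_i u_i) = 0`,
`ρ_i(∂_t u_i + u_i ∂ₓ u_i) + K_i ∂ₓ(ρ_i^{γ_i}) = Σ_j μ_{ij} ∂ₓₓu_j + (−1)^{i+1} a(u₂−u₁)`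
with `u_i` vanishing at `x = 0,1` satisfy, for all `t ∈ [0,T]`,
`Σ_i ∫₀¹ (½ρ_iu_i² + K_i/(γ_i−1) ρ_i^{γ_i}) dx + M₀ Σ_i ∫₀ᵗ∫₀¹ |∂ₓu_i|²
 + a ∫₀ᵗ∫₀¹ |u₁−u₂|² ≤ Σ_i ∫₀¹ (½ρ_{0i}u_{0i}² + K_i/(γ_i−1) ρ_{0i}^{γ_i}) dx`. -/
theorem statement10
    (T : ℝ) (hT : 0 < T)
    (a M₀ : ℝ) (ha : 0 < a) (hM₀ : 0 < M₀)
    (K γ : Fin 2 → ℝ) (hK : ∀ i, 0 < K i) (hγ : ∀ i, 1 < γ i)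
    (μ : Fin 2 → Fin 2 → ℝ)
    (hμ : ∀ ξ : Fin 2 → ℝ, M₀ * (∑ i, (ξ i) ^ 2) ≤ ∑ i, ∑ j, μ i j * ξ j * ξ i)
    -- unknowns and their derivatives
    (ρ u ρt mx ut ux uxx pγx : Fin 2 → ℝ → ℝ → ℝ)
    (hρpos : ∀ i x t, 0 < ρ i x t)
    (hsmooth : ∀ i, Continuous (fun p : ℝ × ℝ => ρ i p.1 p.2) ∧
      Continuous (fun p : ℝ × ℝ => u i p.1 p.2) ∧
      Continuous (fun p : ℝ × ℝ => ut i p.1 p.2) ∧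
      Continuous (fun p : ℝ × ℝ => ux i p.1 p.2) ∧
      Continuous (fun p : ℝ × ℝ => uxx i p.1 p.2) ∧
      Continuous (fun p : ℝ × ℝ => ρt i p.1 p.2) ∧
      Continuous (fun p : ℝ × ℝ => mx i p.1 p.2) ∧
      Continuous (fun p : ℝ × ℝ => pγx i p.1 p.2))
    (hρt : ∀ i x t, HasDerivAt (fun s => ρ i x s) (ρt i x t) t)
    (hmx : ∀ i x t, HasDerivAt (fun y => ρ i y t * u i y t) (mx i x t) x)
    (hut : ∀ i x t, HasDerivAt (fun s => u i x s) (ut i x t) t)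
    (hux : ∀ i x t, HasDerivAt (fun y => u i y t) (ux i x t) x)
    (huxx : ∀ i x t, HasDerivAt (fun y => ux i y t) (uxx i x t) x)
    (hpγx : ∀ i x t, HasDerivAt (fun y => ρ i y t ^ γ i) (pγx i x t) x)
    -- the equations
    (hmass : ∀ i x t, ρt i x t + mx i x t = 0)
    (hmom : ∀ i x t,
      ρ i x t * (ut i x t + u i x t * ux i x t) + K i * pγx i x t =
        (∑ j, μ i j * uxx j x t) +
          (-1) ^ ((i : ℕ) + 1 + 1) * a * (u 1 x t - u 0 x t))
    -- boundary conditions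
    (hbc : ∀ i t, u i 0 t = 0 ∧ u i 1 t = 0) :
    ∀ t ∈ Icc 0 T,
      (∑ i, ∫ x in (0:ℝ)..1,
          ((1/2) * ρ i x t * (u i x t) ^ 2 +
            K i / (γ i - 1) * ρ i x t ^ γ i)) +
        M₀ * (∑ i, ∫ τ in (0:ℝ)..t, ∫ x in (0:ℝ)..1, (ux i x τ) ^ 2) +
        a * (∫ τ in (0:ℝ)..t, ∫ x in (0:ℝ)..1, (u 0 x τ - u 1 x τ) ^ 2) ≤
      ∑ i, ∫ x in (0:ℝ)..1,
          ((1/2) * ρ i x 0 * (u i x 0) ^ 2 +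
            K i / (γ i - 1) * ρ i x 0 ^ γ i) :=
  statement10_general T a M₀ K γ hγ μ hμ ρ u ρt mx ut ux uxx pγx hρpos hsmooth hρt hmx hut hux huxx
    hpγx hmass hmom hbc
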